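/- Let L be a hyperatomic CSL on H and let A ⊆ B(H) be an algebra with Lat A = L and x ∈ [A·x] for every x ∈ H. If {A·x} = {Alg L · x} for every x ∈ H (A is Alg L-transitive), then every vector of H is closed for A, i.e., {A·x} is closed for all x. -/

import Mathlib

noncomputable section

open scoped InnerProductSpace

variable {H : Type*} [NormedAddCommGroup H] [InnerProductSpace ℂ H] [CompleteSpace H]

/-- `P` is an orthogonal projection on `H`. -/
def IsOrthProj (P : H →L[ℂ] H) : Prop := IsSelfAdjoint P ∧ P ∘L P = P

/-- The usual order on orthogonal projections: `P ≤ Q` iff `Q P = P` (range containment). -/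
def pLE (P Q : H →L[ℂ] H) : Prop := Q ∘L P = P

/-- An atom of the lattice `L`: a nonzero interval projection `E - F` (`E, F ∈ L`, `F ≤ E`)
containing no interval projection other than `0` and itself. -/
def IsAtomOf (L : Set (H →L[ℂ] H)) (A : H →L[ℂ] H) : Prop :=
  A ≠ 0 ∧ (∃ E ∈ L, ∃ F ∈ L, pLE F E ∧ A = E - F) ∧
    ∀ E ∈ L, ∀ F ∈ L, pLE F E → pLE (E - F) A → E - F = 0 ∨ E - F = A

/-- `L` is a commutative subspace lattice (CSL): a strongly closed complete lattice of
mutually commuting orthogonal projections containing `0` and `I`.  Completeness is expressed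
by the existence, for every subset, of a member of `L` realizing the honest infimum
(intersection of ranges) and the honest supremum (closed span of ranges). -/
def IsCSL (L : Set (H →L[ℂ] H)) : Prop :=
  (∀ P ∈ L, IsOrthProj P) ∧
  (∀ P ∈ L, ∀ Q ∈ L, P ∘L Q = Q ∘L P) ∧
  (0 : H →L[ℂ] H) ∈ L ∧ (1 : H →L[ℂ] H) ∈ L ∧
  (∀ S ⊆ L, ∃ P ∈ L, (∀ Q ∈ S, pLE P Q) ∧
      LinearMap.range (P : H →ₗ[ℂ] H) = ⨅ Q ∈ S, LinearMap.range (Q : H →ₗ[ℂ] H)) ∧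
  (∀ S ⊆ L, ∃ P ∈ L, (∀ Q ∈ S, pLE Q P) ∧
      LinearMap.range (P : H →ₗ[ℂ] H) = (⨆ Q ∈ S, LinearMap.range (Q : H →ₗ[ℂ] H)).topologicalClosure)

/-- `Alg L`: the algebra of operators leaving every projection of `L` invariant. -/
def AlgL (L : Set (H →L[ℂ] H)) : Set (H →L[ℂ] H) :=
  {T | ∀ P ∈ L, (1 - P) ∘L (T ∘L P) = 0}

/-- The (not necessarily closed) orbit `{Alg L · x}` of a vector `x`. -/
def orbit (L : Set (H →L[ℂ] H)) (x : H) : Set H :=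
  {y | ∃ T ∈ AlgL L, T x = y}

/-- `P` is hyperatomic in `L`: `P = E(A₁, …, Aₖ)`, the smallest projection of `L`
dominating finitely many atoms `A₁, …, Aₖ` of `L`. -/
def HyperatomicIn (L : Set (H →L[ℂ] H)) (P : H →L[ℂ] H) : Prop :=
  ∃ (k : ℕ) (A : Fin k → H →L[ℂ] H), (∀ j, IsAtomOf L (A j)) ∧
    (∀ j, pLE (A j) P) ∧ ∀ F ∈ L, (∀ j, pLE (A j) F) → pLE P F

/-!
For a CSL `L`, the orbit `{Alg L · x}` is the range of the least projection `Q ∈ L` whose range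
contains `x`. It lies in that range because `Alg L` leaves the ranges of members of `L` invariant.
Conversely, if `Q` is generated by the atoms `C₁, …, Cₖ`, then for each atom `C` the vector
`v = (1 - M) x`, with `M` the largest member of `L` annihilated by `C`, satisfies `⟪v, x⟫ ≠ 0`, and
every `P ∈ L` either kills `v` or dominates `C`. Hence the rank-one operators `z ↦ ⟪v, z⟫ y`, with
`y` in the range of the least member of `L` dominating `C`, belong to `Alg L` and move `x` to
multiples of `y`; the join of these finitely many ranges is closed and contains the range of `Q`.
So every orbit of `Alg L` is closed, and an `Alg L`-transitive algebra has the same orbits.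
-/

theorem IsOrthProj.isStarProjection {P : H →L[ℂ] H} (hP : IsOrthProj P) : IsStarProjection P :=
  ⟨hP.2, hP.1⟩

omit [CompleteSpace H] in
theorem pLE.trans {P Q R : H →L[ℂ] H} (hPQ : pLE P Q) (hQR : pLE Q R) : pLE P R := by
  unfold pLE at *
  rw [← hPQ, ← ContinuousLinearMap.comp_assoc, hQR]

omit [CompleteSpace H] in
theorem pLE_iff_range_le {P Q : H →L[ℂ] H} (hQ : IsIdempotentElem Q) :
    pLE P Q ↔ LinearMap.range (P : H →ₗ[ℂ] H) ≤ LinearMap.range (Q : H →ₗ[ℂ] H) := by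
  rw [← LinearMap.IsIdempotentElem.comp_eq_right_iff
      (ContinuousLinearMap.IsIdempotentElem.toLinearMap hQ), pLE, ← ContinuousLinearMap.coe_inj,
    ContinuousLinearMap.toLinearMap_comp]

section CommutingIdempotents

variable {R M : Type*} [Ring R] [AddCommGroup M] [Module R M] [TopologicalSpace M]
  {p q : M →L[R] M}

theorem IsIdempotentElem.mem_range_iff_apply_eq (hp : IsIdempotentElem p) {z : M} :
    z ∈ LinearMap.range (p : M →ₗ[R] M) ↔ p z = z :=
  LinearMap.IsIdempotentElem.mem_range_iff (ContinuousLinearMap.IsIdempotentElem.toLinearMap hp)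

variable [IsTopologicalAddGroup M]

theorem IsIdempotentElem.range_mul_of_commute (hp : IsIdempotentElem p)
    (hq : IsIdempotentElem q) (hpq : Commute p q) :
    LinearMap.range ((p * q : M →L[R] M) : M →ₗ[R] M) =
      LinearMap.range (p : M →ₗ[R] M) ⊓ LinearMap.range (q : M →ₗ[R] M) := by
  ext z
  rw [Submodule.mem_inf, (hp.mul_of_commute hpq hq).mem_range_iff_apply_eq,
    hp.mem_range_iff_apply_eq, hq.mem_range_iff_apply_eq]
  constructor
  · intro h
    constructor
    · rw [← h]
      exact DFunLike.congr_fun (by rw [← mul_assoc, hp.eq] : p * (p * q) = p * q) z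
    · rw [← h]
      exact DFunLike.congr_fun (by rw [← mul_assoc, ← hpq.eq, mul_assoc, hq.eq] :
        q * (p * q) = p * q) z
  · rintro ⟨hpz, hqz⟩
    change p (q z) = z
    rw [hqz, hpz]

theorem IsIdempotentElem.range_add_sub_mul_of_commute (hp : IsIdempotentElem p)
    (hq : IsIdempotentElem q) (hpq : Commute p q) :
    LinearMap.range ((p + q - p * q : M →L[R] M) : M →ₗ[R] M) =
      LinearMap.range (p : M →ₗ[R] M) ⊔ LinearMap.range (q : M →ₗ[R] M) := by
  have hj := hp.add_sub_mul_of_commute hpq hq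
  refine le_antisymm ?_ (sup_le ?_ ?_)
  · rintro _ ⟨z, rfl⟩
    refine Submodule.mem_sup.2 ⟨p z, ⟨z, rfl⟩, q (z - p z), ⟨z - p z, rfl⟩, ?_⟩
    have hqp : q (p z) = p (q z) := DFunLike.congr_fun hpq.eq.symm z
    simp only [ContinuousLinearMap.coe_coe, sub_apply, add_apply, map_sub, hqp]
    change _ = _ + _ - p (q z)
    abel
  · rintro _ ⟨z, rfl⟩
    rw [hj.mem_range_iff_apply_eq]
    refine DFunLike.congr_fun (?_ : (p + q - p * q) * p = p) z
    rw [sub_mul, add_mul, hp.eq, mul_assoc, ← hpq.eq, ← mul_assoc, hp.eq, hpq.eq]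
    abel
  · rintro _ ⟨z, rfl⟩
    rw [hj.mem_range_iff_apply_eq]
    refine DFunLike.congr_fun (?_ : (p + q - p * q) * q = q) z
    rw [sub_mul, add_mul, mul_assoc, hq.eq]
    abel

end CommutingIdempotents

namespace IsCSL

variable {L : Set (H →L[ℂ] H)}

theorem isStarProjection (hL : IsCSL L) {P : H →L[ℂ] H} (hP : P ∈ L) : IsStarProjection P :=
  (hL.1 P hP).isStarProjection

theorem commute (hL : IsCSL L) {P Q : H →L[ℂ] H} (hP : P ∈ L) (hQ : Q ∈ L) : Commute P Q :=
  hL.2.1 P hP Q hQ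

theorem mul_mem (hL : IsCSL L) {P Q : H →L[ℂ] H} (hP : P ∈ L) (hQ : Q ∈ L) : P * Q ∈ L := by
  obtain ⟨hproj, hcomm, -, -, hinf, -⟩ := hL
  obtain ⟨R, hR, -, hRrange⟩ := hinf {P, Q} (Set.pair_subset hP hQ)
  have hP' := (hproj P hP).isStarProjection
  have hQ' := (hproj Q hQ).isStarProjection
  have hPQ := hP'.mul hQ' (hcomm P hP Q hQ)
  convert hR
  rw [ContinuousLinearMap.IsStarProjection.ext_iff hPQ (hproj R hR).isStarProjection, hRrange,
    iInf_pair, hP'.isIdempotentElem.range_mul_of_commute hQ'.isIdempotentElem (hcomm P hP Q hQ)]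

theorem exists_range_eq_sup (hL : IsCSL L) {P Q : H →L[ℂ] H} (hP : P ∈ L) (hQ : Q ∈ L) :
    ∃ J ∈ L, LinearMap.range (J : H →ₗ[ℂ] H) =
      LinearMap.range (P : H →ₗ[ℂ] H) ⊔ LinearMap.range (Q : H →ₗ[ℂ] H) := by
  obtain ⟨hproj, hcomm, -, -, -, hsup⟩ := hL
  obtain ⟨J, hJ, -, hJrange⟩ := hsup {P, Q} (Set.pair_subset hP hQ)
  have hP' := (hproj P hP).isStarProjection.isIdempotentElem
  have hQ' := (hproj Q hQ).isStarProjection.isIdempotentElem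
  refine ⟨J, hJ, ?_⟩
  rw [hJrange, iSup_pair, ← hP'.range_add_sub_mul_of_commute hQ' (hcomm P hP Q hQ)]
  exact (ContinuousLinearMap.IsIdempotentElem.isClosed_range
    (hP'.add_sub_mul_of_commute (hcomm P hP Q hQ) hQ')).submodule_topologicalClosure_eq

theorem exists_range_eq_biSup (hL : IsCSL L) {ι : Type*} (s : Finset ι) (P : ι → H →L[ℂ] H)
    (hP : ∀ i ∈ s, P i ∈ L) :
    ∃ J ∈ L, LinearMap.range (J : H →ₗ[ℂ] H) = ⨆ i ∈ s, LinearMap.range (P i : H →ₗ[ℂ] H) := by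
  classical
  induction s using Finset.induction_on with
  | empty => exact ⟨0, hL.2.2.1, by simp⟩
  | insert i s _ ih =>
    obtain ⟨J, hJ, hJrange⟩ := ih fun j hj => hP j (Finset.mem_insert_of_mem hj)
    obtain ⟨K, hK, hKrange⟩ := hL.exists_range_eq_sup (hP i (Finset.mem_insert_self i s)) hJ
    exact ⟨K, hK, by rw [hKrange, hJrange, Finset.iSup_insert]⟩

theorem exists_least_range_superset (hL : IsCSL L) (s : Set H) :
    ∃ Q ∈ L, s ⊆ LinearMap.range (Q : H →ₗ[ℂ] H) ∧
      ∀ G ∈ L, s ⊆ LinearMap.range (G : H →ₗ[ℂ] H) → pLE Q G := by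
  obtain ⟨-, -, -, -, hinf, -⟩ := hL
  obtain ⟨Q, hQ, hle, hQrange⟩ :=
    hinf {G | G ∈ L ∧ s ⊆ LinearMap.range (G : H →ₗ[ℂ] H)} fun G hG => hG.1
  refine ⟨Q, hQ, fun z hz => ?_, fun G hG hsG => hle G ⟨hG, hsG⟩⟩
  simp only [SetLike.mem_coe, hQrange, Submodule.mem_iInf]
  exact fun G hG => hG.2 hz

theorem exists_greatest_mul_eq_zero (hL : IsCSL L) (C : H →L[ℂ] H) :
    ∃ M ∈ L, C * M = 0 ∧ ∀ G ∈ L, C * G = 0 → pLE G M := by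
  obtain ⟨-, -, -, -, -, hsup⟩ := hL
  obtain ⟨M, hM, hle, hMrange⟩ := hsup {G | G ∈ L ∧ C * G = 0} fun G hG => hG.1
  refine ⟨M, hM, ?_, fun G hG hCG => hle G ⟨hG, hCG⟩⟩
  have hker : LinearMap.range (M : H →ₗ[ℂ] H) ≤ LinearMap.ker (C : H →ₗ[ℂ] H) := by
    rw [hMrange]
    refine Submodule.topologicalClosure_minimal _ (iSup₂_le fun G hG => ?_) C.isClosed_ker
    rintro _ ⟨z, rfl⟩
    exact DFunLike.congr_fun hG.2 z
  ext z
  exact hker ⟨z, rfl⟩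

end IsCSL

namespace IsAtomOf

variable {L : Set (H →L[ℂ] H)} {C : H →L[ℂ] H}

theorem isStarProjection (hL : IsCSL L) (hC : IsAtomOf L C) : IsStarProjection C := by
  obtain ⟨E, hE, F, hF, hFE, rfl⟩ := hC.2.1
  exact (hL.isStarProjection hF).sub_of_mul_eq_right (hL.isStarProjection hE) hFE

theorem commute (hL : IsCSL L) (hC : IsAtomOf L C) {G : H →L[ℂ] H} (hG : G ∈ L) :
    Commute C G := by
  obtain ⟨E, hE, F, hF, -, rfl⟩ := hC.2.1
  exact (hL.commute hE hG).sub_left (hL.commute hF hG)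

/-- Cutting the interval `E - F` down by `G ∈ L` gives the interval `EG - FG` below it. -/
theorem mul_eq_zero_or_eq (hL : IsCSL L) (hC : IsAtomOf L C) {G : H →L[ℂ] H} (hG : G ∈ L) :
    C * G = 0 ∨ C * G = C := by
  have hCidem := (hC.isStarProjection hL).isIdempotentElem
  obtain ⟨-, ⟨E, hE, F, hF, hFE, rfl⟩, hmin⟩ := hC
  have hFG : pLE (F * G) (E * G) := by
    change E * G * (F * G) = F * G
    rw [mul_assoc, ← mul_assoc G, ← (hL.commute hF hG).eq, mul_assoc F,
      (hL.isStarProjection hG).isIdempotentElem.eq, ← mul_assoc]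
    exact congrArg (· * G) hFE
  have hle : pLE (E * G - F * G) (E - F) := by
    change (E - F) * (E * G - F * G) = E * G - F * G
    rw [← sub_mul, ← mul_assoc, hCidem.eq]
  simpa only [sub_mul] using hmin _ (hL.mul_mem hE hG) _ (hL.mul_mem hF hG) hFG hle

theorem exists_separating_vector (hL : IsCSL L) (hC : IsAtomOf L C) {x : H}
    (hx : ∀ G ∈ L, x ∈ LinearMap.range (G : H →ₗ[ℂ] H) → pLE C G) :
    ∃ v : H, ⟪v, x⟫_ℂ ≠ 0 ∧ ∀ P ∈ L, P v = 0 ∨ pLE C P := by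
  obtain ⟨M, hM, hCM, hMmax⟩ := hL.exists_greatest_mul_eq_zero C
  have hN := (hL.isStarProjection hM).one_sub
  refine ⟨(1 - M) x, ?_, fun P hP => ?_⟩
  · have hNx : (1 - M) x ≠ 0 := fun h => hC.1 <| by
      have hMx : x ∈ LinearMap.range (M : H →ₗ[ℂ] H) :=
        (hL.isStarProjection hM).isIdempotentElem.mem_range_iff_apply_eq.2 (sub_eq_zero.1 h).symm
      rw [← hx M hM hMx]
      exact ((hC.commute hL hM).eq.symm.trans hCM)
    have hsymm := hN.isSelfAdjoint.isSymmetric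
    calc ⟪(1 - M) x, x⟫_ℂ = ⟪(1 - M) ((1 - M) x), x⟫_ℂ := by
          rw [← mul_apply_eq_comp, hN.isIdempotentElem.eq]
      _ = ⟪(1 - M) x, (1 - M) x⟫_ℂ := hsymm _ _
      _ ≠ 0 := inner_self_ne_zero.2 hNx
  · rcases hC.mul_eq_zero_or_eq hL hP with hCP | hCP
    · left
      have hMP : M * P = P := hMmax P hP hCP
      rw [← mul_apply_eq_comp, mul_sub, mul_one,
        ← (hL.commute hM hP).eq, hMP, sub_self, zero_apply]
    · exact Or.inr ((hC.commute hL hP).eq.symm.trans hCP)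

end IsAtomOf

section Orbit

variable {L : Set (H →L[ℂ] H)}

omit [CompleteSpace H] in
theorem apply_mem_range_of_mem_algL {T P : H →L[ℂ] H} (hT : T ∈ AlgL L) (hP : P ∈ L) {z : H}
    (hz : z ∈ LinearMap.range (P : H →ₗ[ℂ] H)) : T z ∈ LinearMap.range (P : H →ₗ[ℂ] H) := by
  obtain ⟨w, rfl⟩ := hz
  refine ⟨T (P w), ?_⟩
  have h := DFunLike.congr_fun (hT P hP) w
  simp only [ContinuousLinearMap.comp_apply, sub_apply, one_apply_eq_self, zero_apply,
    sub_eq_zero] at h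
  exact h.symm

theorem rankOne_mem_algL {v y : H} (hL : ∀ P ∈ L, IsSelfAdjoint P)
    (h : ∀ P ∈ L, P v = 0 ∨ P y = y) : InnerProductSpace.rankOne ℂ y v ∈ AlgL L := by
  intro P hP
  ext z
  have hvz : ⟪v, P z⟫_ℂ = ⟪P v, z⟫_ℂ := ((hL P hP).isSymmetric v z).symm
  rcases h P hP with h | h <;> simp [hvz, h]

def orbitSubmodule (L : Set (H →L[ℂ] H)) (x : H) : Submodule ℂ H where
  carrier := orbit L x
  zero_mem' := ⟨0, fun P _ => by simp, rfl⟩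
  add_mem' := by
    rintro _ _ ⟨S, hS, rfl⟩ ⟨T, hT, rfl⟩
    refine ⟨S + T, fun P hP => ?_, rfl⟩
    rw [ContinuousLinearMap.add_comp, ContinuousLinearMap.comp_add, hS P hP, hT P hP, add_zero]
  smul_mem' := by
    rintro c _ ⟨T, hT, rfl⟩
    refine ⟨c • T, fun P hP => ?_, rfl⟩
    rw [ContinuousLinearMap.smul_comp, ContinuousLinearMap.comp_smul, hT P hP, smul_zero]

theorem IsAtomOf.mem_orbit (hL : IsCSL L) {C : H →L[ℂ] H} (hC : IsAtomOf L C) {x y : H}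
    (hx : ∀ G ∈ L, x ∈ LinearMap.range (G : H →ₗ[ℂ] H) → pLE C G)
    (hy : ∀ G ∈ L, pLE C G → y ∈ LinearMap.range (G : H →ₗ[ℂ] H)) : y ∈ orbit L x := by
  obtain ⟨v, hvx, hv⟩ := hC.exists_separating_vector hL hx
  refine ⟨InnerProductSpace.rankOne ℂ ((⟪v, x⟫_ℂ)⁻¹ • y) v,
    rankOne_mem_algL (fun P hP => (hL.isStarProjection hP).isSelfAdjoint) fun P hP => ?_, ?_⟩
  · refine (hv P hP).imp id fun hCP => ?_
    rw [map_smul,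
      (hL.isStarProjection hP).isIdempotentElem.mem_range_iff_apply_eq.1 (hy P hP hCP)]
  · rw [InnerProductSpace.rankOne_apply, smul_smul, mul_inv_cancel₀ hvx, one_smul]

theorem orbit_eq_range (hL : IsCSL L) {Q : H →L[ℂ] H} (hQ : Q ∈ L) (hQhyper : HyperatomicIn L Q)
    {x : H} (hxQ : x ∈ LinearMap.range (Q : H →ₗ[ℂ] H))
    (hQmin : ∀ G ∈ L, x ∈ LinearMap.range (G : H →ₗ[ℂ] H) → pLE Q G) :
    orbit L x = LinearMap.range (Q : H →ₗ[ℂ] H) := by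
  refine Set.Subset.antisymm
    (by rintro _ ⟨T, hT, rfl⟩; exact apply_mem_range_of_mem_algL hT hQ hxQ) ?_
  obtain ⟨k, C, hatom, hCQ, hQleast⟩ := hQhyper
  choose E hE hCE hEleast using
    fun j => hL.exists_least_range_superset (LinearMap.range (C j : H →ₗ[ℂ] H))
  have hEorbit : ∀ j, LinearMap.range (E j : H →ₗ[ℂ] H) ≤ orbitSubmodule L x := by
    intro j y hy
    refine (hatom j).mem_orbit hL (fun G hG hxG => (hCQ j).trans (hQmin G hG hxG))
      fun G hG hCG => ?_
    exact (pLE_iff_range_le (hL.isStarProjection hG).isIdempotentElem).1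
      (hEleast j G hG ((pLE_iff_range_le (hL.isStarProjection hG).isIdempotentElem).1 hCG)) hy
  obtain ⟨J, hJ, hJrange⟩ := hL.exists_range_eq_biSup Finset.univ E fun j _ => hE j
  have hQJ : pLE Q J := hQleast J hJ fun j =>
    (pLE_iff_range_le (hL.isStarProjection hJ).isIdempotentElem).2 <|
      (hCE j).trans <| hJrange ▸
        le_biSup (fun i => LinearMap.range (E i : H →ₗ[ℂ] H)) (Finset.mem_univ j)
  calc (LinearMap.range (Q : H →ₗ[ℂ] H) : Set H)
      ⊆ LinearMap.range (J : H →ₗ[ℂ] H) :=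
        (pLE_iff_range_le (hL.isStarProjection hJ).isIdempotentElem).1 hQJ
    _ ⊆ orbitSubmodule L x := by
        rw [hJrange]
        exact iSup₂_le fun j _ => hEorbit j

theorem isClosed_orbit (hL : IsCSL L) (hhyper : ∀ P ∈ L, HyperatomicIn L P) (x : H) :
    IsClosed (orbit L x) := by
  obtain ⟨Q, hQ, hxQ, hQmin⟩ := hL.exists_least_range_superset {x}
  rw [orbit_eq_range hL hQ (hhyper Q hQ) (hxQ rfl)
    fun G hG hxG => hQmin G hG (Set.singleton_subset_iff.2 hxG)]
  exact ContinuousLinearMap.IsIdempotentElem.isClosed_range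
    (hL.isStarProjection hQ).isIdempotentElem

end Orbit

theorem stmt12_general (L : Set (H →L[ℂ] H)) (hL : IsCSL L)
    (hhyper : ∀ P ∈ L, HyperatomicIn L P)
    (A : NonUnitalSubalgebra ℂ (H →L[ℂ] H))
    (htrans : ∀ x : H, {y : H | ∃ T ∈ A, T x = y} = orbit L x) :
    ∀ x : H, IsClosed {y : H | ∃ T ∈ A, T x = y} :=
  fun x => htrans x ▸ isClosed_orbit hL hhyper x

/-- let `L` be a hyperatomic CSL and `A` an algebra with `Lat A = L` and
`x ∈ [A·x]` for all `x`.  If `A` is `Alg L`-transitive then every vector is closed for `A`. -/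
theorem stmt12 (L : Set (H →L[ℂ] H)) (hL : IsCSL L)
    (hhyper : ∀ P ∈ L, HyperatomicIn L P)
    (A : NonUnitalSubalgebra ℂ (H →L[ℂ] H))
    (hlat : ∀ K : Submodule ℂ H, IsClosed (K : Set H) →
      ((∀ T ∈ A, ∀ z ∈ K, T z ∈ K) ↔ ∃ P ∈ L, LinearMap.range (P : H →ₗ[ℂ] H) = K))
    (happrox : ∀ x : H, x ∈ closure {y : H | ∃ T ∈ A, T x = y})
    (htrans : ∀ x : H, {y : H | ∃ T ∈ A, T x = y} = orbit L x) :
    ∀ x : H, IsClosed {y : H | ∃ T ∈ A, T x = y} :=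
  stmt12_general L hL hhyper A htrans
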